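/- If the rectangles P_1, ..., P_{n−1} can be packed into the unit square with n = 1.35·10^{11} + 1 ≥ 1000, then all rectangles P_i, i ≥ 1, can be packed into a square of area 1 + ε with ε < 1.49·10^{-11}. -/
import Mathlib


open Set

/-- The open axis-aligned rectangle with lower-left corner `p`, width `w` and height `h`. -/
def openRect (p : ℝ × ℝ) (w h : ℝ) : Set (ℝ × ℝ) :=
  Set.Ioo p.1 (p.1 + w) ×ˢ Set.Ioo p.2 (p.2 + h)

/-- The rectangles of dimensions `w i × h i` can be packed into the region `R`:
axis-aligned placements (translations, and 90° rotations swapping the two sides, allowed)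
with pairwise disjoint interiors, all contained in `R`. -/
def RectsPackIn {ι : Type*} (w h : ι → ℝ) (R : Set (ℝ × ℝ)) : Prop :=
  ∃ (pos : ι → ℝ × ℝ) (rot : ι → Bool),
    (∀ i, openRect (pos i) (if rot i then h i else w i) (if rot i then w i else h i) ⊆ R) ∧
    ∀ i j, i ≠ j →
      Disjoint (openRect (pos i) (if rot i then h i else w i) (if rot i then w i else h i))
        (openRect (pos j) (if rot j then h j else w j) (if rot j then w j else h j))

lemma mem_openRect {p : ℝ × ℝ} {w h : ℝ} {z : ℝ × ℝ} :
    z ∈ openRect p w h ↔ (p.1 < z.1 ∧ z.1 < p.1 + w) ∧ (p.2 < z.2 ∧ z.2 < p.2 + h) := by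
  simp [openRect, Set.mem_prod]

lemma disjX {p q : ℝ × ℝ} {w1 h1 w2 h2 : ℝ} (h : p.1 + w1 ≤ q.1) :
    Disjoint (openRect p w1 h1) (openRect q w2 h2) := by
  rw [Set.disjoint_left]
  intro z hz1 hz2
  rw [mem_openRect] at hz1 hz2
  linarith [hz1.1.2, hz2.1.1]

lemma disjY {p q : ℝ × ℝ} {w1 h1 w2 h2 : ℝ} (h : p.2 + h1 ≤ q.2) :
    Disjoint (openRect p w1 h1) (openRect q w2 h2) := by
  rw [Set.disjoint_left]
  intro z hz1 hz2
  rw [mem_openRect] at hz1 hz2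
  linarith [hz1.2.2, hz2.2.1]

lemma rect_sub {p : ℝ × ℝ} {w h a b c d : ℝ} (h1 : a ≤ p.1) (h2 : p.1 + w ≤ b)
    (h3 : c ≤ p.2) (h4 : p.2 + h ≤ d) :
    openRect p w h ⊆ Set.Icc a b ×ˢ Set.Icc c d := by
  intro z hz
  rw [mem_openRect] at hz
  constructor
  · constructor <;> [linarith [hz.1.1]; linarith [hz.1.2]]
  · constructor <;> [linarith [hz.2.1]; linarith [hz.2.2]]

lemma disj_high_x {S : Set (ℝ × ℝ)} {q : ℝ × ℝ} {w h : ℝ}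
    (hS : S ⊆ Set.Icc 0 1 ×ˢ Set.Icc 0 1) (hq : 1 ≤ q.1) :
    Disjoint S (openRect q w h) := by
  rw [Set.disjoint_left]
  intro z hz1 hz2
  rw [mem_openRect] at hz2
  have := (hS hz1).1.2
  linarith [hz2.1.1]

lemma disj_high_y {S : Set (ℝ × ℝ)} {q : ℝ × ℝ} {w h : ℝ}
    (hS : S ⊆ Set.Icc 0 1 ×ˢ Set.Icc 0 1) (hq : 1 ≤ q.2) :
    Disjoint S (openRect q w h) := by
  rw [Set.disjoint_left]
  intro z hz1 hz2
  rw [mem_openRect] at hz2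
  have := (hS hz1).2.2
  linarith [hz2.2.1]

/-- The threshold `n = 1.35·10^{11} + 1`. -/
def NB : ℕ := 135000000001

lemma NB_pos : 0 < NB := by norm_num [NB]

/-- Basic facts about the dyadic group index for `i ≥ 2·NB`. -/
lemma caseC_facts {i : ℕ} (hi : 2 * NB ≤ i) :
    1 ≤ Nat.log2 (i / NB) ∧ NB * 2 ^ Nat.log2 (i / NB) ≤ i ∧
      i < 2 * (NB * 2 ^ Nat.log2 (i / NB)) := by
  have hNB : 0 < NB := NB_pos
  have h2le : 2 ≤ i / NB := by
    rw [Nat.le_div_iff_mul_le hNB]; omega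
  have h0 : i / NB ≠ 0 := by omega
  have hself : 2 ^ Nat.log2 (i / NB) ≤ i / NB := Nat.log2_self_le h0
  have hlt : i / NB < 2 ^ (Nat.log2 (i / NB) + 1) := Nat.lt_log2_self
  refine ⟨?_, ?_, ?_⟩
  · rw [Nat.le_log2 h0]; simpa using h2le
  · have h := (Nat.le_div_iff_mul_le hNB).mp hself
    calc NB * 2 ^ Nat.log2 (i / NB) = 2 ^ Nat.log2 (i / NB) * NB := by ring
    _ ≤ i := h
  · have h := (Nat.div_lt_iff_lt_mul hNB).mp hlt
    calc i < 2 ^ (Nat.log2 (i / NB) + 1) * NB := h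
    _ = 2 * (NB * 2 ^ Nat.log2 (i / NB)) := by ring

lemma caseC_real {i : ℕ} (hi : 2 * NB ≤ i) :
    (2:ℝ) ≤ 2 ^ Nat.log2 (i / NB) ∧ ((NB:ℝ) * 2 ^ Nat.log2 (i / NB)) ≤ i ∧
      ((i:ℝ) + 1) ≤ 2 * ((NB:ℝ) * 2 ^ Nat.log2 (i / NB)) := by
  obtain ⟨h1, h2, h3⟩ := caseC_facts hi
  refine ⟨?_, ?_, ?_⟩
  · calc (2:ℝ) = 2 ^ 1 := by norm_num
    _ ≤ 2 ^ Nat.log2 (i / NB) := pow_le_pow_right₀ one_le_two h1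
  · have := Nat.cast_le (α := ℝ).mpr h2
    push_cast at this
    linarith
  · have : (i:ℝ) + 1 ≤ ((2 * (NB * 2 ^ Nat.log2 (i / NB)) : ℕ) : ℝ) := by
      exact_mod_cast Nat.cast_le (α := ℝ).mpr h3
    push_cast at this
    linarith

/-- Positions for packing all rectangles. -/
noncomputable def packPos (P : {i : ℕ // 1 ≤ i ∧ i < 135000000001} → ℝ × ℝ)
    (i : {i : ℕ // 1 ≤ i}) : ℝ × ℝ :=
  if h : i.1 < NB then P ⟨i.1, i.2, h⟩
  else if i.1 < 2 * NB then (1, ((i.1 : ℝ) - NB) / NB)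
  else (((i.1 : ℝ) - NB * 2 ^ Nat.log2 (i.1 / NB)) / (NB * 2 ^ Nat.log2 (i.1 / NB)),
    1 + (1 - 2 / 2 ^ Nat.log2 (i.1 / NB)) / NB)

/-- Rotations for packing all rectangles. -/
def packRot (R : {i : ℕ // 1 ≤ i ∧ i < 135000000001} → Bool)
    (i : {i : ℕ // 1 ≤ i}) : Bool :=
  if h : i.1 < NB then R ⟨i.1, i.2, h⟩
  else if i.1 < 2 * NB then true else false

/-- If the rectangles `P_1, …, P_{n-1}` can be packed into the unit square with
`n = 1.35·10^{11} + 1`, then all rectangles `P_i`, `i ≥ 1`, can be packed into a square of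
area `1 + ε` with `ε < 1.49·10^{-11}`. -/
theorem pack_all_small_epsilon
    (hpack : RectsPackIn (ι := {i : ℕ // 1 ≤ i ∧ i < 135000000001})
      (fun i => (1 : ℝ) / (i : ℕ)) (fun i => (1 : ℝ) / ((i : ℕ) + 1))
      (Set.Icc 0 1 ×ˢ Set.Icc 0 1)) :
    ∃ ε : ℝ, 0 ≤ ε ∧ ε < 1.49e-11 ∧ ∃ s : ℝ, s ^ 2 = 1 + ε ∧
      RectsPackIn (ι := {i : ℕ // 1 ≤ i})
        (fun i => (1 : ℝ) / (i : ℕ)) (fun i => (1 : ℝ) / ((i : ℕ) + 1))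
        (Set.Icc 0 s ×ˢ Set.Icc 0 s) := by
  obtain ⟨P, R, hPsub, hPdis⟩ := hpack
  have hNR : ((NB : ℕ) : ℝ) = 135000000001 := by norm_num [NB]
  have hNpos : (0 : ℝ) < (NB : ℝ) := by rw [hNR]; norm_num
  set s : ℝ := 1 + 1 / (NB : ℝ) with hs
  have hs1 : 1 ≤ s := by
    have h : 0 < 1 / (NB : ℝ) := by positivity
    rw [hs]; linarith
  refine ⟨2 / (NB : ℝ) + 1 / (NB : ℝ) ^ 2, by positivity, ?_, s, by rw [hs]; field_simp; ring, ?_⟩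
  · rw [hNR]; norm_num
  -- the square [0,s]² contains the unit square
  have hsq : Set.Icc (0:ℝ) 1 ×ˢ Set.Icc (0:ℝ) 1 ⊆ Set.Icc 0 s ×ˢ Set.Icc 0 s := by
    intro z hz
    exact ⟨⟨hz.1.1, le_trans hz.1.2 hs1⟩, ⟨hz.2.1, le_trans hz.2.2 hs1⟩⟩
  classical
  -- positions and rotations
  refine ⟨packPos P, packRot R, ?_, ?_⟩
  · -- containment
    intro i
    simp only [packPos, packRot]
    by_cases hA : i.1 < NB
    · simp only [dif_pos hA]
      exact fun z hz => hsq (hPsub ⟨i.1, i.2, hA⟩ hz)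
    · have hiR : ((NB:ℕ):ℝ) ≤ ((i.1:ℕ):ℝ) := Nat.cast_le.mpr (le_of_not_gt hA)
      have hipos : (0:ℝ) < (i.1:ℝ) := by
        have := i.2; positivity
      by_cases hB : i.1 < 2 * NB
      · simp only [dif_neg hA, if_pos hB, if_true]
        have hinv : 1 / ((i.1:ℕ):ℝ) ≤ 1 / (NB:ℝ) := by gcongr
        have hinv2 : 1 / (((i.1:ℕ):ℝ) + 1) ≤ 1 / (NB:ℝ) := by gcongr; linarith
        have hi2 : ((i.1:ℕ):ℝ) + 1 ≤ 2 * (NB:ℝ) := by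
          have : ((i.1 + 1 : ℕ):ℝ) ≤ ((2 * NB : ℕ):ℝ) := Nat.cast_le.mpr hB
          push_cast at this; linarith
        have k1 : (0:ℝ) ≤ 1 := by norm_num
        have k2 : (1:ℝ) + 1 / (((i.1:ℕ):ℝ) + 1) ≤ s := by rw [hs]; linarith
        have k3 : (0:ℝ) ≤ (((i.1:ℕ):ℝ) - NB) / NB := div_nonneg (by linarith) hNpos.le
        have k4 : (((i.1:ℕ):ℝ) - NB) / NB + 1 / (i.1:ℝ) ≤ s := by
          calc (((i.1:ℕ):ℝ) - NB) / NB + 1 / (i.1:ℝ)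
              ≤ (((i.1:ℕ):ℝ) - NB) / NB + 1 / (NB:ℝ) := by linarith
            _ = (((i.1:ℕ):ℝ) + 1 - NB) / NB := by ring
            _ ≤ (NB:ℝ) / NB := by gcongr <;> linarith
            _ = 1 := div_self hNpos.ne'
            _ ≤ s := hs1
        exact rect_sub k1 k2 k3 k4
      · simp only [dif_neg hA, if_neg hB, Bool.false_eq_true, if_false]
        have hC : 2 * NB ≤ i.1 := le_of_not_gt hB
        obtain ⟨c1, c2, c3⟩ := caseC_real hC
        set M : ℝ := (NB:ℝ) * 2 ^ Nat.log2 (i.1 / NB) with hM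
        have hMpos : 0 < M := by rw [hM]; positivity
        have hinv : 1 / ((i.1:ℕ):ℝ) ≤ 1 / M := by gcongr
        have hinv2 : 1 / (((i.1:ℕ):ℝ) + 1) ≤ 1 / M := by gcongr; linarith
        have h2jpos : (0:ℝ) < 2 ^ Nat.log2 (i.1 / NB) := by positivity
        have h2j1 : 2 / (2:ℝ) ^ Nat.log2 (i.1 / NB) ≤ 1 := by
          rw [div_le_one h2jpos]; linarith
        have k1 : (0:ℝ) ≤ (((i.1:ℕ):ℝ) - M) / M := div_nonneg (by linarith) hMpos.le
        have k2 : (((i.1:ℕ):ℝ) - M) / M + 1 / (i.1:ℝ) ≤ s := by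
          calc (((i.1:ℕ):ℝ) - M) / M + 1 / (i.1:ℝ)
              ≤ (((i.1:ℕ):ℝ) - M) / M + 1 / M := by linarith
            _ = (((i.1:ℕ):ℝ) + 1 - M) / M := by ring
            _ ≤ M / M := by gcongr; linarith
            _ = 1 := div_self hMpos.ne'
            _ ≤ s := hs1
        have k3 : (0:ℝ) ≤ 1 + (1 - 2 / (2:ℝ) ^ Nat.log2 (i.1 / NB)) / NB := by
          have h0 : 0 ≤ (1 - 2 / (2:ℝ) ^ Nat.log2 (i.1 / NB)) / NB :=
            div_nonneg (by linarith) hNpos.le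
          linarith
        have k4 : 1 + (1 - 2 / (2:ℝ) ^ Nat.log2 (i.1 / NB)) / NB
            + 1 / (((i.1:ℕ):ℝ) + 1) ≤ s := by
          have heq : (1 - 2 / (2:ℝ) ^ Nat.log2 (i.1 / NB)) / NB + 1 / M =
              (1 - 1 / (2:ℝ) ^ Nat.log2 (i.1 / NB)) / NB := by
            rw [hM]; field_simp; ring
          have h1 : (0:ℝ) < 1 / ((2:ℝ) ^ Nat.log2 (i.1 / NB)) := by positivity
          have h2 : (1 - 1 / (2:ℝ) ^ Nat.log2 (i.1 / NB)) / NB ≤ 1 / NB := by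
            gcongr; linarith
          rw [hs]
          calc 1 + (1 - 2 / (2:ℝ) ^ Nat.log2 (i.1 / NB)) / (NB:ℝ) + 1 / (((i.1:ℕ):ℝ) + 1)
              ≤ 1 + ((1 - 2 / (2:ℝ) ^ Nat.log2 (i.1 / NB)) / NB + 1 / M) := by linarith
            _ = 1 + (1 - 1 / (2:ℝ) ^ Nat.log2 (i.1 / NB)) / NB := by rw [heq]
            _ ≤ 1 + 1 / (NB:ℝ) := by linarith
        exact rect_sub k1 k2 k3 k4
  · -- disjointness
    have key : ∀ a b : {k : ℕ // 1 ≤ k}, (a : ℕ) < (b : ℕ) →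
        Disjoint
          (openRect (packPos P a)
            (if packRot R a then (1:ℝ) / (((a:ℕ):ℝ) + 1) else 1 / ((a:ℕ):ℝ))
            (if packRot R a then (1:ℝ) / ((a:ℕ):ℝ) else 1 / (((a:ℕ):ℝ) + 1)))
          (openRect (packPos P b)
            (if packRot R b then (1:ℝ) / (((b:ℕ):ℝ) + 1) else 1 / ((b:ℕ):ℝ))
            (if packRot R b then (1:ℝ) / ((b:ℕ):ℝ) else 1 / (((b:ℕ):ℝ) + 1))) := by
      intro a b hab
      have hapos : (0:ℝ) < (a.1:ℝ) := by have := a.2; positivity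
      by_cases hbA : b.1 < NB
      · have haA : a.1 < NB := lt_trans hab hbA
        simp only [packPos, packRot, dif_pos haA, dif_pos hbA]
        exact hPdis ⟨a.1, a.2, haA⟩ ⟨b.1, b.2, hbA⟩
          (by simp only [ne_eq, Subtype.mk.injEq]; omega)
      · have hbN : (NB:ℝ) ≤ ((b.1:ℕ):ℝ) := Nat.cast_le.mpr (le_of_not_gt hbA)
        by_cases hbB : b.1 < 2 * NB
        · by_cases haA : a.1 < NB
          · -- old rectangle vs right strip
            simp only [packPos, packRot, dif_pos haA, dif_neg hbA, if_pos hbB]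
            exact disj_high_x (hPsub ⟨a.1, a.2, haA⟩) le_rfl
          · -- right strip vs right strip
            have haB : a.1 < 2 * NB := lt_trans hab hbB
            have haN : (NB:ℝ) ≤ ((a.1:ℕ):ℝ) := Nat.cast_le.mpr (le_of_not_gt haA)
            have hab1 : ((a.1:ℕ):ℝ) + 1 ≤ ((b.1:ℕ):ℝ) := by
              have : ((a.1 + 1 : ℕ):ℝ) ≤ ((b.1:ℕ):ℝ) := Nat.cast_le.mpr hab
              push_cast at this; linarith
            simp only [packPos, packRot, dif_neg haA, dif_neg hbA, if_pos haB, if_pos hbB,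
              if_true]
            apply disjY
            show (((a.1:ℕ):ℝ) - NB) / NB + 1 / ((a.1:ℕ):ℝ) ≤ (((b.1:ℕ):ℝ) - NB) / NB
            have hinv : 1 / ((a.1:ℕ):ℝ) ≤ 1 / (NB:ℝ) := by gcongr
            calc (((a.1:ℕ):ℝ) - NB) / NB + 1 / ((a.1:ℕ):ℝ)
                ≤ (((a.1:ℕ):ℝ) - NB) / NB + 1 / (NB:ℝ) := by linarith
              _ = (((a.1:ℕ):ℝ) + 1 - NB) / NB := by ring
              _ ≤ (((b.1:ℕ):ℝ) - NB) / NB := by gcongr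
        · -- b is in the top strip
          have hbC : 2 * NB ≤ b.1 := le_of_not_gt hbB
          obtain ⟨c1b, c2b, c3b⟩ := caseC_real hbC
          have h2jbpos : (0:ℝ) < 2 ^ Nat.log2 (b.1 / NB) := by positivity
          have hb1 : 2 / (2:ℝ) ^ Nat.log2 (b.1 / NB) ≤ 1 := by
            rw [div_le_one h2jbpos]; linarith
          have hytop : (1:ℝ) ≤ 1 + (1 - 2 / (2:ℝ) ^ Nat.log2 (b.1 / NB)) / NB := by
            have : (0:ℝ) ≤ (1 - 2 / (2:ℝ) ^ Nat.log2 (b.1 / NB)) / NB :=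
              div_nonneg (by linarith) hNpos.le
            linarith
          by_cases haA : a.1 < NB
          · -- old rectangle vs top strip
            simp only [packPos, packRot, dif_pos haA, dif_neg hbA, if_neg hbB]
            exact disj_high_y (hPsub ⟨a.1, a.2, haA⟩) hytop
          · have haN : (NB:ℝ) ≤ ((a.1:ℕ):ℝ) := Nat.cast_le.mpr (le_of_not_gt haA)
            by_cases haB : a.1 < 2 * NB
            · -- right strip vs top strip
              have ha2 : ((a.1:ℕ):ℝ) + 1 ≤ 2 * (NB:ℝ) := by
                have : ((a.1 + 1 : ℕ):ℝ) ≤ ((2 * NB : ℕ):ℝ) := Nat.cast_le.mpr haB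
                push_cast at this; linarith
              simp only [packPos, packRot, dif_neg haA, dif_neg hbA, if_pos haB, if_neg hbB,
                if_true, Bool.false_eq_true, if_false]
              apply disjY
              show (((a.1:ℕ):ℝ) - NB) / NB + 1 / ((a.1:ℕ):ℝ) ≤
                1 + (1 - 2 / (2:ℝ) ^ Nat.log2 (b.1 / NB)) / NB
              have hinv : 1 / ((a.1:ℕ):ℝ) ≤ 1 / (NB:ℝ) := by gcongr
              have : (((a.1:ℕ):ℝ) - NB) / NB + 1 / ((a.1:ℕ):ℝ) ≤ 1 := by
                calc (((a.1:ℕ):ℝ) - NB) / NB + 1 / ((a.1:ℕ):ℝ)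
                    ≤ (((a.1:ℕ):ℝ) - NB) / NB + 1 / (NB:ℝ) := by linarith
                  _ = (((a.1:ℕ):ℝ) + 1 - NB) / NB := by ring
                  _ ≤ (NB:ℝ) / NB := by gcongr <;> linarith
                  _ = 1 := div_self hNpos.ne'
              linarith
            · -- top strip vs top strip
              have haC : 2 * NB ≤ a.1 := le_of_not_gt haB
              obtain ⟨c1a, c2a, c3a⟩ := caseC_real haC
              have h2japos : (0:ℝ) < 2 ^ Nat.log2 (a.1 / NB) := by positivity
              have ha0 : a.1 / NB ≠ 0 := by
                have : 2 ≤ a.1 / NB := by rw [Nat.le_div_iff_mul_le NB_pos]; omega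
                omega
              have hb0 : b.1 / NB ≠ 0 := by
                have : 2 ≤ b.1 / NB := by rw [Nat.le_div_iff_mul_le NB_pos]; omega
                omega
              have hmono : Nat.log2 (a.1 / NB) ≤ Nat.log2 (b.1 / NB) := by
                rw [Nat.le_log2 hb0]
                exact le_trans (Nat.log2_self_le ha0)
                  (Nat.div_le_div_right (le_of_lt hab))
              simp only [packPos, packRot, dif_neg haA, dif_neg hbA, if_neg haB, if_neg hbB,
                Bool.false_eq_true, if_false]
              rcases eq_or_lt_of_le hmono with heq | hlt
              · -- same dyadic group: separated horizontally
                rw [heq]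
                set M : ℝ := (NB:ℝ) * 2 ^ Nat.log2 (b.1 / NB) with hM
                have hMpos : 0 < M := by rw [hM]; positivity
                have hMa : M ≤ ((a.1:ℕ):ℝ) := by rw [hM, ← heq]; exact c2a
                have hab1 : ((a.1:ℕ):ℝ) + 1 ≤ ((b.1:ℕ):ℝ) := by
                  have : ((a.1 + 1 : ℕ):ℝ) ≤ ((b.1:ℕ):ℝ) := Nat.cast_le.mpr hab
                  push_cast at this; linarith
                apply disjX
                show (((a.1:ℕ):ℝ) - M) / M + 1 / ((a.1:ℕ):ℝ) ≤ (((b.1:ℕ):ℝ) - M) / M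
                have hinv : 1 / ((a.1:ℕ):ℝ) ≤ 1 / M := by gcongr
                calc (((a.1:ℕ):ℝ) - M) / M + 1 / ((a.1:ℕ):ℝ)
                    ≤ (((a.1:ℕ):ℝ) - M) / M + 1 / M := by linarith
                  _ = (((a.1:ℕ):ℝ) + 1 - M) / M := by ring
                  _ ≤ (((b.1:ℕ):ℝ) - M) / M := by gcongr
              · -- different dyadic groups: separated vertically
                apply disjY
                show 1 + (1 - 2 / (2:ℝ) ^ Nat.log2 (a.1 / NB)) / NB + 1 / (((a.1:ℕ):ℝ) + 1) ≤
                  1 + (1 - 2 / (2:ℝ) ^ Nat.log2 (b.1 / NB)) / NB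
                have hpow : (2:ℝ) * 2 ^ Nat.log2 (a.1 / NB) ≤ 2 ^ Nat.log2 (b.1 / NB) := by
                  have h : (2:ℝ) ^ (Nat.log2 (a.1 / NB) + 1) ≤ 2 ^ Nat.log2 (b.1 / NB) :=
                    pow_le_pow_right₀ one_le_two hlt
                  rw [pow_succ] at h
                  linarith
                have hMa : (NB:ℝ) * 2 ^ Nat.log2 (a.1 / NB) ≤ ((a.1:ℕ):ℝ) := c2a
                have hMapos : (0:ℝ) < (NB:ℝ) * 2 ^ Nat.log2 (a.1 / NB) := by positivity
                have hinv : 1 / (((a.1:ℕ):ℝ) + 1) ≤ 1 / ((NB:ℝ) * 2 ^ Nat.log2 (a.1 / NB)) := by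
                  gcongr; linarith
                have heq' : (1 - 2 / (2:ℝ) ^ Nat.log2 (a.1 / NB)) / NB +
                    1 / ((NB:ℝ) * 2 ^ Nat.log2 (a.1 / NB)) =
                    (1 - 1 / (2:ℝ) ^ Nat.log2 (a.1 / NB)) / NB := by
                  field_simp; ring
                have hdd : 2 / (2:ℝ) ^ Nat.log2 (b.1 / NB) ≤
                    1 / (2:ℝ) ^ Nat.log2 (a.1 / NB) := by
                  rw [div_le_div_iff₀ h2jbpos h2japos]
                  linarith
                have hfin : (1 - 1 / (2:ℝ) ^ Nat.log2 (a.1 / NB)) / NB ≤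
                    (1 - 2 / (2:ℝ) ^ Nat.log2 (b.1 / NB)) / NB := by gcongr <;> linarith
                calc 1 + (1 - 2 / (2:ℝ) ^ Nat.log2 (a.1 / NB)) / NB + 1 / (((a.1:ℕ):ℝ) + 1)
                    ≤ 1 + ((1 - 2 / (2:ℝ) ^ Nat.log2 (a.1 / NB)) / NB +
                      1 / ((NB:ℝ) * 2 ^ Nat.log2 (a.1 / NB))) := by linarith
                  _ = 1 + (1 - 1 / (2:ℝ) ^ Nat.log2 (a.1 / NB)) / NB := by rw [heq']
                  _ ≤ 1 + (1 - 2 / (2:ℝ) ^ Nat.log2 (b.1 / NB)) / NB := by linarith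
    intro i j hij
    rcases lt_trichotomy (i : ℕ) (j : ℕ) with h | h | h
    · exact key i j h
    · exact absurd (Subtype.ext h) hij
    · exact (key j i h).symm
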